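/- arXiv:2106.05666 — 5 statements merged into one kernel-verified Lean document; each statement's English description precedes it below -/
import Mathlib

section
/- Let M be a finite abelian group and S, T : M → M commuting endomorphisms. Then the ordinary projectors satisfy e(S ∘ T) = e(S) ∘ e(T), where e(U) denotes the idempotent lim_n U^(n!). -/
theorem stmt3_general (M : Type*) [AddCommGroup M] (S T : AddMonoid.End M)
    (hST : Commute S T) (N₁ N₂ N₃ : ℕ)
    (hS : ∀ n : ℕ, N₁ ≤ n → S ^ n.factorial = S ^ N₁.factorial)
    (hT : ∀ n : ℕ, N₂ ≤ n → T ^ n.factorial = T ^ N₂.factorial)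
    (hST' : ∀ n : ℕ, N₃ ≤ n → (S * T) ^ n.factorial = (S * T) ^ N₃.factorial) :
    (S * T) ^ N₃.factorial = S ^ N₁.factorial * T ^ N₂.factorial := by
  let n := max N₁ (max N₂ N₃)
  rw [← hST' n (by omega), hST.mul_pow, hS n (by omega), hT n (by omega)]

/-- For commuting endomorphisms `S`, `T` of a finite abelian group,
the ordinary projectors satisfy `e(S ∘ T) = e(S) ∘ e(T)`, where `e(U)` is the
eventual value of the sequence `U^(n!)`. -/
theorem stmt3 (M : Type*) [AddCommGroup M] [Finite M] (S T : AddMonoid.End M)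
    (hST : Commute S T) (N₁ N₂ N₃ : ℕ)
    (hS : ∀ n : ℕ, N₁ ≤ n → S ^ n.factorial = S ^ N₁.factorial)
    (hT : ∀ n : ℕ, N₂ ≤ n → T ^ n.factorial = T ^ N₂.factorial)
    (hST' : ∀ n : ℕ, N₃ ≤ n → (S * T) ^ n.factorial = (S * T) ^ N₃.factorial) :
    (S * T) ^ N₃.factorial = S ^ N₁.factorial * T ^ N₂.factorial :=
  stmt3_general M S T hST N₁ N₂ N₃ hS hT hST'
end

section
/- Let M, N be finite abelian groups and f : M → N, g : N → M homomorphisms. Then f restricts to an isomorphism from e(g∘f)(M) onto e(f∘g)(N), with inverse induced by g composed with an appropriate power of f∘g. -/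
/-!
Write `u = g ∘ f`, `v = f ∘ g` and `P = k + 1` for a common factorial past both
stabilization points. The stabilization makes `e = u^[P]` and `e' = v^[P]` idempotent,
and `f ∘ u^[n] = v^[n] ∘ f`, `g ∘ v^[n] = u^[n] ∘ g`. Hence `g ∘ v^[k]` inverts `f`
on the image of `e`: `g (v^[k] (f (e x))) = u^[k + 1] (e x) = e (e x) = e x`, and
symmetrically on the image of `e'`.
-/

open Function Set Nat

namespace Function

variable {α β : Type*}

theorem comp_self_eq_of_iterate_succ_eq {e : α → α} {m : ℕ}
    (h₁ : e^[m + 1] = e) (h₂ : e^[m + 2] = e) : e ∘ e = e :=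
  calc e ∘ e = e^[m + 1] ∘ e := by rw [h₁]
    _ = e^[m + 2] := (iterate_succ e (m + 1)).symm
    _ = e := h₂

theorem iterate_factorial_comp_self {u : α → α} {N : ℕ}
    (h : ∀ n, N ≤ n → u^[n !] = u^[N !]) : u^[N !] ∘ u^[N !] = u^[N !] := by
  have h₁ : (u^[N !])^[N + 1] = u^[N !] := by
    rw [← iterate_mul, mul_comm, ← factorial_succ, h _ N.le_succ]
  refine comp_self_eq_of_iterate_succ_eq h₁ ?_
  calc (u^[N !])^[N + 2] = ((u^[N !])^[N + 1])^[N + 2] := by rw [h₁]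
    _ = u^[(N + 2)!] := by
      rw [← iterate_mul, ← iterate_mul, factorial_succ, factorial_succ]
      congr 1; ring
    _ = u^[N !] := h _ (by omega)

theorem semiconj_comp_comp (f : α → β) (g : β → α) : Semiconj f (g ∘ f) (f ∘ g) :=
  fun _ ↦ rfl

theorem mapsTo_range_iterate_comp (f : α → β) (g : β → α) (n : ℕ) :
    MapsTo f (range (g ∘ f)^[n]) (range (f ∘ g)^[n]) := by
  rintro _ ⟨x, rfl⟩
  exact ⟨f x, ((semiconj_comp_comp f g).iterate_right n x).symm⟩

theorem mapsTo_range_iterate_self (u : α → α) (m n : ℕ) :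
    MapsTo u^[m] (range u^[n]) (range u^[n]) := by
  rintro _ ⟨x, rfl⟩
  exact ⟨u^[m] x, ((Commute.refl u).iterate_iterate n m).eq x⟩

section

variable (f : α → β) (g : β → α) (k : ℕ)

theorem leftInvOn_range_iterate_comp
    (he : (g ∘ f)^[k + 1] ∘ (g ∘ f)^[k + 1] = (g ∘ f)^[k + 1]) :
    LeftInvOn (g ∘ (f ∘ g)^[k]) f (range (g ∘ f)^[k + 1]) := by
  rintro _ ⟨x, rfl⟩
  calc g ((f ∘ g)^[k] (f ((g ∘ f)^[k + 1] x)))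
      = (g ∘ f)^[k] (g (f ((g ∘ f)^[k + 1] x))) :=
        (semiconj_comp_comp g f).iterate_right k _
    _ = (g ∘ f)^[k + 1] ((g ∘ f)^[k + 1] x) := (iterate_succ_apply _ _ _).symm
    _ = (g ∘ f)^[k + 1] x := congrFun he x

theorem rightInvOn_range_iterate_comp
    (he : (f ∘ g)^[k + 1] ∘ (f ∘ g)^[k + 1] = (f ∘ g)^[k + 1]) :
    RightInvOn (g ∘ (f ∘ g)^[k]) f (range (f ∘ g)^[k + 1]) := by
  rintro _ ⟨y, rfl⟩
  calc f (g ((f ∘ g)^[k] ((f ∘ g)^[k + 1] y)))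
      = (f ∘ g)^[k + 1] ((f ∘ g)^[k + 1] y) := (iterate_succ_apply' (f ∘ g) k _).symm
    _ = (f ∘ g)^[k + 1] y := congrFun he y

theorem bijOn_range_iterate_comp
    (he : (g ∘ f)^[k + 1] ∘ (g ∘ f)^[k + 1] = (g ∘ f)^[k + 1])
    (he' : (f ∘ g)^[k + 1] ∘ (f ∘ g)^[k + 1] = (f ∘ g)^[k + 1]) :
    BijOn f (range (g ∘ f)^[k + 1]) (range (f ∘ g)^[k + 1]) :=
  InvOn.bijOn ⟨leftInvOn_range_iterate_comp f g k he, rightInvOn_range_iterate_comp f g k he'⟩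
    (mapsTo_range_iterate_comp f g _)
    ((mapsTo_range_iterate_comp g f _).comp (mapsTo_range_iterate_self _ _ _))

end

end Function

theorem stmt4_general (M N : Type*) [AddCommGroup M] [AddCommGroup N]
    (f : M →+ N) (g : N →+ M) (N₁ N₂ : ℕ)
    (h₁ : ∀ n : ℕ, N₁ ≤ n →
      (⇑(g.comp f))^[n.factorial] = (⇑(g.comp f))^[N₁.factorial])
    (h₂ : ∀ n : ℕ, N₂ ≤ n →
      (⇑(f.comp g))^[n.factorial] = (⇑(f.comp g))^[N₂.factorial]) :
    Set.BijOn ⇑f (Set.range ((⇑(g.comp f))^[N₁.factorial]))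
      (Set.range ((⇑(f.comp g))^[N₂.factorial])) ∧
    ∃ k : ℕ,
      (∀ x ∈ Set.range ((⇑(g.comp f))^[N₁.factorial]),
        g ((⇑(f.comp g))^[k] (f x)) = x) ∧
      (∀ y ∈ Set.range ((⇑(f.comp g))^[N₂.factorial]),
        f (g ((⇑(f.comp g))^[k] y)) = y) := by
  obtain ⟨k, hk⟩ := exists_eq_succ_of_ne_zero (factorial_ne_zero (max N₁ N₂))
  have hu := h₁ _ (le_max_left N₁ N₂)
  have hv := h₂ _ (le_max_right N₁ N₂)
  have he := iterate_factorial_comp_self h₁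
  have he' := iterate_factorial_comp_self h₂
  rw [← hu, hk] at he ⊢
  rw [← hv, hk] at he' ⊢
  simp only [AddMonoidHom.coe_comp] at he he' ⊢
  exact ⟨bijOn_range_iterate_comp f g k he he', k, leftInvOn_range_iterate_comp f g k he,
    rightInvOn_range_iterate_comp f g k he'⟩

/-- For homomorphisms `f : M → N`, `g : N → M` of finite abelian groups, `f` restricts
to an isomorphism from `e(g∘f)(M)` onto `e(f∘g)(N)`, with inverse induced by `g`
composed with an appropriate power of `f∘g`.  Here `e(U)` is the ordinary projector,
i.e. the eventual value of the iterates `U^(n!)`. -/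
theorem stmt4 (M N : Type*) [AddCommGroup M] [AddCommGroup N] [Finite M] [Finite N]
    (f : M →+ N) (g : N →+ M) (N₁ N₂ : ℕ)
    (h₁ : ∀ n : ℕ, N₁ ≤ n →
      (⇑(g.comp f))^[n.factorial] = (⇑(g.comp f))^[N₁.factorial])
    (h₂ : ∀ n : ℕ, N₂ ≤ n →
      (⇑(f.comp g))^[n.factorial] = (⇑(f.comp g))^[N₂.factorial]) :
    Set.BijOn ⇑f (Set.range ((⇑(g.comp f))^[N₁.factorial]))
      (Set.range ((⇑(f.comp g))^[N₂.factorial])) ∧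
    ∃ k : ℕ,
      (∀ x ∈ Set.range ((⇑(g.comp f))^[N₁.factorial]),
        g ((⇑(f.comp g))^[k] (f x)) = x) ∧
      (∀ y ∈ Set.range ((⇑(f.comp g))^[N₂.factorial]),
        f (g ((⇑(f.comp g))^[k] y)) = y) :=
  stmt4_general M N f g N₁ N₂ h₁ h₂
end

section
/- Let k be a finite field, V and W finite-dimensional k-vector spaces, B : V × W → k a perfect bilinear pairing, and S : V → V, T : W → W linear maps that are adjoint, i.e. B(Sv, w) = B(v, Tw) for all v, w. Then B(e(S)v, w) = B(v, e(T)w) for all v, w, and the restriction of B to e(S)(V) × e(T)(W) is a perfect pairing. -/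
/-!
Adjointness passes to powers, so `e(S)` and `e(T)` are adjoint once both are computed with the
same large factorial. Writing `e = S ^ N!`, both `e ^ (N + 1) = S ^ (N + 1)!` and
`e ^ ((N + 1) * (N + 2)) = S ^ (N + 2)!` equal `e`, which forces `e ^ 2 = e ^ (N + 2) = e`.
For adjoint idempotents `e`, `f`, a vector `v = e v` orthogonal to `f(W)` satisfies
`B v w = B (e v) w = B v (f w) = 0` for every `w`, so it vanishes by perfectness.
-/

section Pairing

variable {R M N : Type*} [CommSemiring R] [AddCommMonoid M] [Module R M]
  [AddCommMonoid N] [Module R N] (B : M →ₗ[R] N →ₗ[R] R)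

theorem LinearMap.pow_apply_apply_eq_of_adjoint {S : Module.End R M} {T : Module.End R N}
    (hadj : ∀ v w, B (S v) w = B v (T w)) (n : ℕ) (v : M) (w : N) :
    B ((S ^ n) v) w = B v ((T ^ n) w) := by
  induction n generalizing v with
  | zero => rfl
  | succ n ih => rw [pow_succ, pow_succ', Module.End.mul_apply, ih, hadj, Module.End.mul_apply]

theorem LinearMap.eq_zero_of_mem_range_of_adjoint_idempotent
    (hperf : ∀ v, (∀ w, B v w = 0) → v = 0) {e : Module.End R M} {f : Module.End R N}
    (he : IsIdempotentElem e) (hadj : ∀ v w, B (e v) w = B v (f w)) :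
    ∀ v ∈ Set.range e, (∀ w ∈ Set.range f, B v w = 0) → v = 0 := by
  rintro _ ⟨x, rfl⟩ horth
  have hfix : e (e x) = e x := congrArg (· x) he.eq
  rw [← hfix]
  exact hperf _ fun w => by rw [hadj]; exact horth _ ⟨w, rfl⟩

end Pairing

theorem Monoid.isIdempotentElem_pow_factorial {G : Type*} [Monoid G] {a : G} {N : ℕ}
    (ha : ∀ n, N ≤ n → a ^ n.factorial = a ^ N.factorial) :
    IsIdempotentElem (a ^ N.factorial) := by
  set e := a ^ N.factorial
  have hsucc : e ^ (N + 1) = e := by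
    rw [← pow_mul, mul_comm, ← Nat.factorial_succ, ha _ N.le_succ]
  have hsucc_succ : e ^ (N + 2) = e := by
    calc e ^ (N + 2) = (e ^ (N + 1)) ^ (N + 2) := by rw [hsucc]
      _ = a ^ (N + 2).factorial := by
        rw [← pow_mul, ← pow_mul, Nat.factorial_succ, Nat.factorial_succ]; ring_nf
      _ = e := ha _ (by omega)
  calc e * e = e ^ (N + 1) * e := by rw [hsucc]
    _ = e := by rw [← pow_succ, hsucc_succ]

theorem stmt5_general (k V W : Type*) [Field k] [AddCommGroup V] [Module k V]
    [AddCommGroup W] [Module k W]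
    (B : V →ₗ[k] W →ₗ[k] k)
    (hperf₁ : ∀ v, (∀ w, B v w = 0) → v = 0)
    (hperf₂ : ∀ w, (∀ v, B v w = 0) → w = 0)
    (S : Module.End k V) (T : Module.End k W)
    (hadj : ∀ v w, B (S v) w = B v (T w))
    (NS NT : ℕ)
    (hS : ∀ n : ℕ, NS ≤ n → S ^ n.factorial = S ^ NS.factorial)
    (hT : ∀ n : ℕ, NT ≤ n → T ^ n.factorial = T ^ NT.factorial) :
    (∀ v w, B ((S ^ NS.factorial) v) w = B v ((T ^ NT.factorial) w)) ∧
    (∀ v ∈ Set.range ⇑(S ^ NS.factorial),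
      (∀ w ∈ Set.range ⇑(T ^ NT.factorial), B v w = 0) → v = 0) ∧
    (∀ w ∈ Set.range ⇑(T ^ NT.factorial),
      (∀ v ∈ Set.range ⇑(S ^ NS.factorial), B v w = 0) → w = 0) := by
  have key : ∀ v w, B ((S ^ NS.factorial) v) w = B v ((T ^ NT.factorial) w) := by
    intro v w
    rw [← hS _ (le_max_left NS NT), ← hT _ (le_max_right NS NT),
      B.pow_apply_apply_eq_of_adjoint hadj]
  refine ⟨key, B.eq_zero_of_mem_range_of_adjoint_idempotent hperf₁
    (Monoid.isIdempotentElem_pow_factorial hS) key, ?_⟩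
  exact B.flip.eq_zero_of_mem_range_of_adjoint_idempotent hperf₂
    (Monoid.isIdempotentElem_pow_factorial hT) fun w v => (key v w).symm

/-- For a perfect pairing `B` between finite-dimensional vector spaces over a finite field,
and adjoint operators `S`, `T`, the ordinary projectors `e(S) = S^(N!)` (eventual value of
`S^(n!)`) and `e(T)` are adjoint, and `B` restricts to a perfect pairing between
`e(S)(V)` and `e(T)(W)`. -/
theorem stmt5 (k V W : Type*) [Field k] [Finite k] [AddCommGroup V] [Module k V]
    [FiniteDimensional k V] [AddCommGroup W] [Module k W] [FiniteDimensional k W]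
    (B : V →ₗ[k] W →ₗ[k] k)
    (hperf₁ : ∀ v, (∀ w, B v w = 0) → v = 0)
    (hperf₂ : ∀ w, (∀ v, B v w = 0) → w = 0)
    (S : Module.End k V) (T : Module.End k W)
    (hadj : ∀ v w, B (S v) w = B v (T w))
    (NS NT : ℕ)
    (hS : ∀ n : ℕ, NS ≤ n → S ^ n.factorial = S ^ NS.factorial)
    (hT : ∀ n : ℕ, NT ≤ n → T ^ n.factorial = T ^ NT.factorial) :
    (∀ v w, B ((S ^ NS.factorial) v) w = B v ((T ^ NT.factorial) w)) ∧
    (∀ v ∈ Set.range ⇑(S ^ NS.factorial),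
      (∀ w ∈ Set.range ⇑(T ^ NT.factorial), B v w = 0) → v = 0) ∧
    (∀ w ∈ Set.range ⇑(T ^ NT.factorial),
      (∀ v ∈ Set.range ⇑(S ^ NS.factorial), B v w = 0) → w = 0) :=
  stmt5_general k V W B hperf₁ hperf₂ S T hadj NS NT hS hT
end

section
/- Let F be a totally real number field with set of real embeddings Σ, and let a : Σ → ℤ. Suppose that ∏_{σ∈Σ} σ(ε)^{a_σ} = 1 for every totally positive unit ε of O_F. Then a is constant, i.e. a_σ = a_τ for all σ, τ ∈ Σ. -/
/-!
Squaring turns every unit `ε` into a totally positive one, so taking logarithms the hypothesis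
says that `∑_σ a_σ log |σ ε| = 0` for every unit `ε`. Since `F` is totally real, the real embeddings
are the infinite places, all of multiplicity one, so this says that the linear form
`x ↦ ∑_{w ≠ w₀} (a_w - a_{w₀}) x_w` vanishes on the unit lattice. By Dirichlet's unit theorem the
unit lattice spans the whole log space, hence the form is zero and `a` is constant.
-/

open NumberField

theorem Real.sum_mul_log_abs_eq_zero_of_prod_sq_zpow_eq_one {ι : Type*} [Fintype ι] {x : ι → ℝ}
    (hx : ∀ i, x i ≠ 0) {a : ι → ℤ} (h : ∏ i, (x i ^ 2) ^ a i = 1) :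
    ∑ i, (a i : ℝ) * Real.log |x i| = 0 := by
  have hlog := congrArg Real.log h
  rw [Real.log_prod fun i _ ↦ zpow_ne_zero _ (pow_ne_zero 2 (hx i)), Real.log_one] at hlog
  simp only [Real.log_zpow, Real.log_pow, ← Real.log_abs (x _), mul_left_comm _ ((2 : ℕ) : ℝ),
    ← Finset.mul_sum] at hlog
  simpa using hlog

namespace NumberField.Units

open InfinitePlace dirichletUnitTheorem

variable {K : Type*} [Field K] [NumberField K]

theorem linearMap_eq_zero_of_forall_logEmbedding_eq_zero {M : Type*} [AddCommGroup M]
    [Module ℝ M] {f : logSpace K →ₗ[ℝ] M}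
    (hf : ∀ u : (𝓞 K)ˣ, f (logEmbedding K (Additive.ofMul u)) = 0) : f = 0 := by
  have hle : Submodule.span ℝ (unitLattice K : Set (logSpace K)) ≤ LinearMap.ker f := by
    rw [Submodule.span_le]
    rintro _ ⟨u, -, rfl⟩
    exact hf u.toMul
  rwa [unitLattice_span_eq_top, top_le_iff, LinearMap.ker_eq_top] at hle

open scoped Classical in
theorem eq_of_forall_sum_mul_mult_mul_log_eq_zero {c : InfinitePlace K → ℝ}
    (hc : ∀ u : (𝓞 K)ˣ, ∑ w, c w * (mult w * Real.log (w u)) = 0) (w w' : InfinitePlace K) :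
    c w = c w' := by
  suffices h : ∀ w, c w = c w₀ by rw [h w, h w']
  intro w
  let d : logSpace K := fun v ↦ c v - c w₀
  have hd : dotProductEquiv ℝ _ d = 0 := by
    refine linearMap_eq_zero_of_forall_logEmbedding_eq_zero fun u ↦ ?_
    have hsum := hc u
    rw [Fintype.sum_eq_add_sum_subtype_ne _ w₀] at hsum
    have hlog := sum_logEmbedding_component u
    simp only [logEmbedding_component] at hlog
    simp only [dotProductEquiv_apply_apply, dotProduct, d, sub_mul, Finset.sum_sub_distrib,
      ← Finset.mul_sum, logEmbedding_component, hlog]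
    linarith
  by_cases hw : w = w₀
  · rw [hw]
  · simpa [d, dotProduct_single, sub_eq_zero] using LinearMap.congr_fun hd (Pi.single ⟨w, hw⟩ 1)

end NumberField.Units

namespace NumberField.InfinitePlace

variable {K : Type*} [Field K]

noncomputable def ofRealEmbedding (σ : K →+* ℝ) : InfinitePlace K :=
  mk (Complex.ofRealHom.comp σ)

@[simp]
theorem ofRealEmbedding_apply (σ : K →+* ℝ) (x : K) : ofRealEmbedding σ x = |σ x| := by
  simp [ofRealEmbedding, apply]

theorem ofRealEmbedding_injective : Function.Injective (ofRealEmbedding (K := K)) := by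
  intro σ τ h
  have hreal :
      ComplexEmbedding.conjugate (Complex.ofRealHom.comp σ) = Complex.ofRealHom.comp σ := by
    ext x
    simp
  rw [ofRealEmbedding, ofRealEmbedding, mk_eq_iff, hreal, or_self] at h
  ext x
  simpa using RingHom.congr_fun h x

theorem ofRealEmbedding_embedding_of_isReal {w : InfinitePlace K} (hw : IsReal w) :
    ofRealEmbedding (embedding_of_isReal hw) = w := by
  rw [ofRealEmbedding]
  conv_rhs => rw [← mk_embedding w]
  congr 1
  ext x
  simp

theorem ofRealEmbedding_bijective [IsTotallyReal K] :
    Function.Bijective (ofRealEmbedding (K := K)) :=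
  ⟨ofRealEmbedding_injective,
    fun w ↦ ⟨_, ofRealEmbedding_embedding_of_isReal (IsTotallyReal.isReal w)⟩⟩

end NumberField.InfinitePlace

theorem NumberField.isTotallyReal_of_forall_im_eq_zero {K : Type*} [Field K]
    (h : ∀ φ : K →+* ℂ, ∀ x, (φ x).im = 0) : IsTotallyReal K where
  isReal w := by
    rw [InfinitePlace.isReal_iff, ComplexEmbedding.isReal_iff]
    ext x
    exact Complex.conj_eq_iff_im.mpr (h _ x)

/-- If a family of integer exponents `a : Σ → ℤ` over the real embeddings of a totally
real number field `F` satisfies `∏_σ σ(ε)^(a σ) = 1` for every totally positive unit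
`ε` of `O_F`, then `a` is constant. -/
theorem stmt10 (F : Type*) [Field F] [NumberField F] [Fintype (F →+* ℝ)]
    (htr : ∀ φ : F →+* ℂ, ∀ x : F, (φ x).im = 0)
    (a : (F →+* ℝ) → ℤ)
    (ha : ∀ ε : (𝓞 F)ˣ, (∀ σ : F →+* ℝ, 0 < σ (algebraMap (𝓞 F) F (ε : 𝓞 F))) →
      ∏ σ : F →+* ℝ, σ (algebraMap (𝓞 F) F (ε : 𝓞 F)) ^ a σ = 1) :
    ∀ σ τ : F →+* ℝ, a σ = a τ := by
  have := isTotallyReal_of_forall_im_eq_zero htr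
  have hlog (u : (𝓞 F)ˣ) : ∑ σ, (a σ : ℝ) * Real.log |σ u| = 0 := by
    have hu (σ : F →+* ℝ) : σ u ≠ 0 := (map_ne_zero σ).mpr (Units.coe_ne_zero u)
    have hsq (σ : F →+* ℝ) : σ (algebraMap (𝓞 F) F ((u ^ 2 : (𝓞 F)ˣ) : 𝓞 F)) = σ u ^ 2 := by
      simp
    have hprod := ha (u ^ 2) fun σ ↦ hsq σ ▸ pow_two_pos_of_ne_zero (hu σ)
    simp only [hsq] at hprod
    exact Real.sum_mul_log_abs_eq_zero_of_prod_sq_zpow_eq_one hu hprod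
  let e := Equiv.ofBijective _ (InfinitePlace.ofRealEmbedding_bijective (K := F))
  have hconst := Units.eq_of_forall_sum_mul_mult_mul_log_eq_zero
    (c := fun w ↦ (a (e.symm w) : ℝ)) fun u ↦ by
      rw [← e.sum_comp]
      simpa [e, (IsTotallyReal.isReal _).mult_eq_one] using hlog u
  intro σ τ
  simpa [e] using hconst (e σ) (e τ)
end

section
/- Let p be a prime, S ⊆ ℕ an infinite set, and u = 1 + p. Then the ℤ_p-algebra homomorphism ℤ_p[[X]] → ∏_{k∈S} ℤ_p given by f ↦ (f(u^k − 1))_{k∈S} is injective. -/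
/-!
A power series over `ℤ_p` that vanishes at a point `a` with `‖a‖ < 1` factors as `(X - a) * g`.
Peeling off `n` distinct zeros in the disc `‖x‖ ≤ r < 1` this way bounds every coefficient by
`‖c_m‖ * r ^ m ≤ r ^ n`, so a series with infinitely many zeros in that disc is zero. The points
`(1 + p) ^ k - 1` are pairwise distinct and have norm at most `p⁻¹`.
-/

open PowerSeries

namespace PadicInt

variable {p : ℕ} [Fact p.Prime]

noncomputable def evalPowerSeries (f : ℤ_[p]⟦X⟧) (x : ℤ_[p]) : ℤ_[p] :=
  ∑' n, coeff n f * x ^ n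

theorem summable_norm_coeff_mul_pow (f : ℤ_[p]⟦X⟧) {x : ℤ_[p]} (hx : ‖x‖ < 1) :
    Summable fun n => ‖coeff n f * x ^ n‖ := by
  refine (summable_geometric_of_lt_one (norm_nonneg x) hx).of_nonneg_of_le (fun _ => norm_nonneg _)
    fun n => ?_
  rw [norm_mul, norm_pow]
  exact mul_le_of_le_one_left (by positivity) (norm_le_one _)

theorem evalPowerSeries_sub (f g : ℤ_[p]⟦X⟧) {x : ℤ_[p]} (hx : ‖x‖ < 1) :
    evalPowerSeries (f - g) x = evalPowerSeries f x - evalPowerSeries g x := by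
  simp only [evalPowerSeries, map_sub, sub_mul]
  exact (summable_norm_coeff_mul_pow f hx).of_norm.tsum_sub
    (summable_norm_coeff_mul_pow g hx).of_norm

theorem evalPowerSeries_mul (f g : ℤ_[p]⟦X⟧) {x : ℤ_[p]} (hx : ‖x‖ < 1) :
    evalPowerSeries (f * g) x = evalPowerSeries f x * evalPowerSeries g x := by
  rw [evalPowerSeries, evalPowerSeries, evalPowerSeries,
    tsum_mul_tsum_eq_tsum_sum_antidiagonal_of_summable_norm (summable_norm_coeff_mul_pow f hx)
      (summable_norm_coeff_mul_pow g hx)]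
  refine tsum_congr fun n => ?_
  rw [coeff_mul, Finset.sum_mul]
  refine Finset.sum_congr rfl fun ij hij => ?_
  rw [← Finset.HasAntidiagonal.mem_antidiagonal.mp hij, pow_add]
  ring

theorem evalPowerSeries_X_sub_C (a x : ℤ_[p]) : evalPowerSeries (X - C a) x = x - a := by
  rw [evalPowerSeries, tsum_eq_sum (s := Finset.range 2)]
  · simp [Finset.sum_range_succ, coeff_X, coeff_C, neg_add_eq_sub]
  · intro n hn
    simp only [Finset.mem_range, not_lt] at hn
    simp [coeff_X, coeff_C, show n ≠ 0 by omega, show n ≠ 1 by omega]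

theorem exists_eq_X_sub_C_mul_of_evalPowerSeries_eq_zero {f : ℤ_[p]⟦X⟧} {a : ℤ_[p]}
    (ha : ‖a‖ < 1) (hfa : evalPowerSeries f a = 0) : ∃ g, f = (X - C a) * g := by
  -- the tails `t m = ∑ i, f_{m+i} a^i` satisfy `t m = f_m + a t (m+1)` and `t 0 = f(a) = 0`
  set t : ℕ → ℤ_[p] := fun m => ∑' i, coeff (m + i) f * a ^ i
  have hs (m : ℕ) : Summable fun i => coeff (m + i) f * a ^ i :=
    (summable_norm_coeff_mul_pow (mk fun i => coeff (m + i) f) ha).of_norm.congr fun i => by simp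
  have ht (m : ℕ) : t m = coeff m f + a * t (m + 1) := by
    simp only [t]
    rw [(hs m).tsum_eq_zero_add, ← (hs (m + 1)).tsum_mul_left]
    simp only [add_zero, pow_zero, mul_one]
    exact congrArg _ (tsum_congr fun i => by ring_nf)
  have ht0 : t 0 = 0 := by simpa [t, evalPowerSeries] using hfa
  refine ⟨mk fun m => t (m + 1), ?_⟩
  ext (_ | m)
  · simp only [sub_mul, map_sub, coeff_zero_X_mul, coeff_C_mul, coeff_mk]
    linear_combination ht0 - (ht 0 : t 0 = coeff 0 f + a * t 1)
  · simp only [sub_mul, map_sub, coeff_succ_X_mul, coeff_C_mul, coeff_mk]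
    linear_combination -ht (m + 1)

theorem norm_coeff_mul_pow_le_pow_card {r : ℝ} (hr0 : 0 ≤ r) (hr1 : r < 1) (T : Finset ℤ_[p]) :
    ∀ f : ℤ_[p]⟦X⟧, (∀ a ∈ T, ‖a‖ ≤ r ∧ evalPowerSeries f a = 0) →
      ∀ m, ‖coeff m f‖ * r ^ m ≤ r ^ T.card := by
  classical
  induction T using Finset.induction_on with
  | empty =>
    intro f _ m
    simpa using mul_le_one₀ (norm_le_one _) (by positivity) (pow_le_one₀ hr0 hr1.le)
  | insert a T haT ih =>
    intro f hf m
    obtain ⟨har, hfa⟩ := hf a (Finset.mem_insert_self a T)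
    obtain ⟨g, rfl⟩ := exists_eq_X_sub_C_mul_of_evalPowerSeries_eq_zero (har.trans_lt hr1) hfa
    have hg : ∀ b ∈ T, ‖b‖ ≤ r ∧ evalPowerSeries g b = 0 := by
      intro b hb
      obtain ⟨hbr, hfb⟩ := hf b (Finset.mem_insert_of_mem hb)
      rw [evalPowerSeries_mul _ _ (hbr.trans_lt hr1), evalPowerSeries_X_sub_C] at hfb
      exact ⟨hbr, (mul_eq_zero.mp hfb).resolve_left (sub_ne_zero.mpr (ne_of_mem_of_not_mem hb haT))⟩
    have hXg : ‖coeff m (X * g)‖ * r ^ m ≤ r ^ (T.card + 1) := by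
      cases m with
      | zero =>
        rw [coeff_zero_X_mul, norm_zero, zero_mul]
        positivity
      | succ m =>
        rw [coeff_succ_X_mul, pow_succ, pow_succ, ← mul_assoc]
        gcongr
        exact ih g hg m
    have hag : ‖a * coeff m g‖ * r ^ m ≤ r ^ (T.card + 1) := by
      rw [norm_mul, mul_assoc, pow_succ']
      gcongr
      exact ih g hg m
    rw [Finset.card_insert_of_notMem haT, sub_mul, map_sub, coeff_C_mul, sub_eq_add_neg]
    calc _ ≤ max ‖coeff m (X * g)‖ ‖-(a * coeff m g)‖ * r ^ m := by
          gcongr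
          exact IsUltrametricDist.norm_add_le_max _ _
      _ ≤ _ := by
          rw [norm_neg, max_mul_of_nonneg _ _ (by positivity)]
          exact max_le hXg hag

theorem eq_zero_of_evalPowerSeries_eq_zero_of_infinite {f : ℤ_[p]⟦X⟧} {Z : Set ℤ_[p]}
    (hZ : Z.Infinite) {r : ℝ} (hr1 : r < 1) (hZr : ∀ z ∈ Z, ‖z‖ ≤ r)
    (hfZ : ∀ z ∈ Z, evalPowerSeries f z = 0) : f = 0 := by
  obtain ⟨z, hzZ, hz0⟩ := (hZ.sdiff (Set.finite_singleton 0)).nonempty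
  have hr0 : 0 < r := (norm_pos_iff.mpr hz0).trans_le (hZr z hzZ)
  ext m
  have hle (n : ℕ) : ‖coeff m f‖ * r ^ m ≤ r ^ n := by
    obtain ⟨T, hTZ, rfl⟩ := hZ.exists_subset_card_eq n
    exact norm_coeff_mul_pow_le_pow_card hr0.le hr1 T f
      (fun a ha => ⟨hZr a (hTZ ha), hfZ a (hTZ ha)⟩) m
  have hnonpos := ge_of_tendsto' (tendsto_pow_atTop_nhds_zero_of_lt_one hr0.le hr1) hle
  simpa using nonpos_of_mul_nonpos_left hnonpos (by positivity)

theorem norm_one_add_p_pow_sub_one_le (k : ℕ) : ‖(1 + p : ℤ_[p]) ^ k - 1‖ ≤ (p : ℝ)⁻¹ := by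
  obtain ⟨c, hc⟩ := sub_one_dvd_pow_sub_one (1 + p : ℤ_[p]) k
  rw [hc, add_sub_cancel_left, norm_mul, norm_p]
  exact mul_le_of_le_one_right (by positivity) (norm_le_one c)

theorem one_add_p_pow_sub_one_injective :
    Function.Injective fun k : ℕ => (1 + p : ℤ_[p]) ^ k - 1 := by
  intro k l h
  have : (1 + p) ^ k = (1 + p) ^ l := by exact_mod_cast sub_left_injective h
  exact Nat.pow_right_injective (by linarith [(Fact.out : p.Prime).two_le]) this

end PadicInt

/-- For `u = 1 + p` and an infinite set `S ⊆ ℕ`, the map sending a power series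
`f ∈ ℤ_p[[X]]` to its values `f(u^k - 1)` for `k ∈ S` is injective. -/
theorem stmt13 (p : ℕ) [Fact p.Prime] (S : Set ℕ) (hS : S.Infinite) :
    Function.Injective (fun f : PowerSeries ℤ_[p] => fun k : S =>
      ∑' n : ℕ, (PowerSeries.coeff (R := ℤ_[p]) n f) * ((1 + p : ℤ_[p]) ^ (k : ℕ) - 1) ^ n) := by
  intro f g hfg
  have hp : (p : ℝ)⁻¹ < 1 := inv_lt_one_of_one_lt₀ (by exact_mod_cast (Fact.out : p.Prime).one_lt)
  rw [← sub_eq_zero]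
  refine PadicInt.eq_zero_of_evalPowerSeries_eq_zero_of_infinite
    (hS.image PadicInt.one_add_p_pow_sub_one_injective.injOn) hp ?_ ?_
  · rintro _ ⟨k, -, rfl⟩
    exact PadicInt.norm_one_add_p_pow_sub_one_le k
  · rintro _ ⟨k, hk, rfl⟩
    have hk1 := (PadicInt.norm_one_add_p_pow_sub_one_le (p := p) k).trans_lt hp
    rw [PadicInt.evalPowerSeries_sub _ _ hk1, sub_eq_zero]
    exact congrFun hfg ⟨k, hk⟩
end
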